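/- Suppose φ̄ : (Fin n → ℝ) → ℝ is differentiable and satisfies the steady-state HJB equation with state cost m, i.e. for all x: ∇φ̄(x) ⬝ᵥ f(x) − (1/4)·((g x)ᵀ.mulVec (∇φ̄ x)) ⬝ᵥ (R⁻¹.mulVec ((g x)ᵀ.mulVec (∇φ̄ x))) + m(x) = 0. Let x : ℝ → (Fin n → ℝ) be differentiable and solve the optimal closed loop x'(t) = f(x(t)) − (1/2)·(g (x t)).mulVec (R⁻¹.mulVec ((g (x t))ᵀ.mulVec (∇φ̄ (x t)))) for all t, and define the feedback u*(y) := −(1/2)·R⁻¹.mulVec ((g y)ᵀ.mulVec (∇φ̄ y)). Then for every t, the composite t ↦ φ̄(x(t)) has derivative at t equal to −( m(x(t)) + ‖u*(x(t))‖²_R ). In particular, if m(y) ≥ 0 for all y, this derivative is ≤ 0 for all t. -/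

import Mathlib

open Matrix

/-- Euclidean gradient of a scalar function on `Fin n → ℝ`:
the vector of partial derivatives. -/
noncomputable def grad {n : ℕ} (φ : (Fin n → ℝ) → ℝ) (x : Fin n → ℝ) : Fin n → ℝ :=
  fun i => fderiv ℝ φ x (Pi.single i 1)

/-- `R`-weighted squared norm `‖u‖²_R = u ⬝ᵥ R.mulVec u`. -/
def sqR {p : ℕ} (R : Matrix (Fin p) (Fin p) ℝ) (u : Fin p → ℝ) : ℝ :=
  u ⬝ᵥ R.mulVec u

/-! Along the closed loop the rate of change of `φ̄` is `∇φ̄ ⬝ᵥ f - ½ aᵀR⁻¹a` with `a = gᵀ∇φ̄`;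
the HJB equation turns `∇φ̄ ⬝ᵥ f` into `¼ aᵀR⁻¹a - m`, and `¼ aᵀR⁻¹a` is exactly `‖u*‖²_R`
because `u* = -½ R⁻¹a`. -/

lemma fderiv_apply_eq_grad_dotProduct {n : ℕ} (φ : (Fin n → ℝ) → ℝ) (y v : Fin n → ℝ) :
    fderiv ℝ φ y v = grad φ y ⬝ᵥ v := by
  rw [← ContinuousLinearMap.coe_coe, LinearMap.pi_apply_eq_sum_univ]
  simp only [dotProduct, grad, smul_eq_mul, mul_comm (v _)]
  congr! 3 with i
  ext j
  simp only [Pi.single_apply, eq_comm]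

lemma DifferentiableAt.hasDerivAt_comp_grad_dotProduct {n : ℕ} {φ : (Fin n → ℝ) → ℝ}
    {x : ℝ → Fin n → ℝ} {v : Fin n → ℝ} {t : ℝ} (hφ : DifferentiableAt ℝ φ (x t)) (hx : HasDerivAt x v t) :
    HasDerivAt (fun s => φ (x s)) (grad φ (x t) ⬝ᵥ v) t := by
  rw [← fderiv_apply_eq_grad_dotProduct]
  exact hφ.hasFDerivAt.comp_hasDerivAt t hx

lemma sqR_nonneg {p : ℕ} {R : Matrix (Fin p) (Fin p) ℝ} (hR : R.PosSemidef) (u : Fin p → ℝ) :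
    0 ≤ sqR R u :=
  hR.dotProduct_mulVec_nonneg u

lemma sqR_smul_inv_mulVec {p : ℕ} {R : Matrix (Fin p) (Fin p) ℝ} (hR : IsUnit R.det) (c : ℝ)
    (a : Fin p → ℝ) : sqR R (c • R⁻¹ *ᵥ a) = c ^ 2 * (a ⬝ᵥ R⁻¹ *ᵥ a) := by
  rw [sqR, mulVec_smul, mulVec_mulVec, mul_nonsing_inv R hR, one_mulVec, smul_dotProduct,
    dotProduct_smul, dotProduct_comm, smul_eq_mul, smul_eq_mul]
  ring

lemma dotProduct_sub_half_smul_mulVec_inv_mulVec {n p : ℕ} (G b : Fin n → ℝ)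
    (M : Matrix (Fin n) (Fin p) ℝ) (R : Matrix (Fin p) (Fin p) ℝ) :
    G ⬝ᵥ (b - (1 / 2 : ℝ) • M *ᵥ (R⁻¹ *ᵥ (Mᵀ *ᵥ G)))
      = G ⬝ᵥ b - 1 / 2 * (Mᵀ *ᵥ G ⬝ᵥ R⁻¹ *ᵥ (Mᵀ *ᵥ G)) := by
  rw [dotProduct_sub, dotProduct_smul, dotProduct_mulVec, ← mulVec_transpose, smul_eq_mul]

theorem stmt_8_general {n p : ℕ}
    (f : (Fin n → ℝ) → (Fin n → ℝ))
    (g : (Fin n → ℝ) → Matrix (Fin n) (Fin p) ℝ)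
    (R : Matrix (Fin p) (Fin p) ℝ)
    (hRpd : R.PosDef)
    (m : (Fin n → ℝ) → ℝ)
    (φb : (Fin n → ℝ) → ℝ)
    (hφ : Differentiable ℝ φb)
    (hHJB : ∀ x, grad φb x ⬝ᵥ f x
        - (1/4) * ((g x)ᵀ.mulVec (grad φb x) ⬝ᵥ R⁻¹.mulVec ((g x)ᵀ.mulVec (grad φb x)))
        + m x = 0)
    (x : ℝ → (Fin n → ℝ))
    (hx : ∀ t, HasDerivAt x
      (f (x t) - (1/2 : ℝ) • (g (x t)).mulVec (R⁻¹.mulVec ((g (x t))ᵀ.mulVec (grad φb (x t))))) t)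
    (ustar : (Fin n → ℝ) → (Fin p → ℝ))
    (hustar : ∀ y, ustar y = -(1/2 : ℝ) • R⁻¹.mulVec ((g y)ᵀ.mulVec (grad φb y))) :
    ∀ t, HasDerivAt (fun s => φb (x s)) (-(m (x t) + sqR R (ustar (x t)))) t
      ∧ ((∀ y, 0 ≤ m y) → -(m (x t) + sqR R (ustar (x t))) ≤ 0) := by
  intro t
  set a := (g (x t))ᵀ *ᵥ grad φb (x t)
  have hcost : sqR R (ustar (x t)) = 1 / 4 * (a ⬝ᵥ R⁻¹ *ᵥ a) := by
    rw [hustar, sqR_smul_inv_mulVec (isUnit_iff_isUnit_det R |>.mp hRpd.isUnit)]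
    ring
  have hrate : grad φb (x t) ⬝ᵥ
      (f (x t) - (1 / 2 : ℝ) • g (x t) *ᵥ (R⁻¹ *ᵥ a)) = -(m (x t) + sqR R (ustar (x t))) := by
    rw [dotProduct_sub_half_smul_mulVec_inv_mulVec, hcost]
    linarith [hHJB (x t)]
  refine ⟨hrate ▸ hφ.differentiableAt.hasDerivAt_comp_grad_dotProduct (hx t), fun hm => ?_⟩
  linarith [hm (x t), sqR_nonneg hRpd.posSemidef (ustar (x t))]

theorem stmt_8 {n p : ℕ}
    (f : (Fin n → ℝ) → (Fin n → ℝ))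
    (g : (Fin n → ℝ) → Matrix (Fin n) (Fin p) ℝ)
    (R : Matrix (Fin p) (Fin p) ℝ)
    (hRsymm : R.IsSymm) (hRpd : R.PosDef)
    (m : (Fin n → ℝ) → ℝ)
    (φb : (Fin n → ℝ) → ℝ)
    (hφ : Differentiable ℝ φb)
    (hHJB : ∀ x, grad φb x ⬝ᵥ f x
        - (1/4) * ((g x)ᵀ.mulVec (grad φb x) ⬝ᵥ R⁻¹.mulVec ((g x)ᵀ.mulVec (grad φb x)))
        + m x = 0)
    (x : ℝ → (Fin n → ℝ))
    (hx : ∀ t, HasDerivAt x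
      (f (x t) - (1/2 : ℝ) • (g (x t)).mulVec (R⁻¹.mulVec ((g (x t))ᵀ.mulVec (grad φb (x t))))) t)
    (ustar : (Fin n → ℝ) → (Fin p → ℝ))
    (hustar : ∀ y, ustar y = -(1/2 : ℝ) • R⁻¹.mulVec ((g y)ᵀ.mulVec (grad φb y))) :
    ∀ t, HasDerivAt (fun s => φb (x s)) (-(m (x t) + sqR R (ustar (x t)))) t
      ∧ ((∀ y, 0 ≤ m y) → -(m (x t) + sqR R (ustar (x t))) ≤ 0) :=
  stmt_8_general f g R hRpd m φb hφ hHJB x hx ustar hustar
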